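/- For ρ > 1, a > -1, and nonnegative integers m, n: ∫_0^∞ L_m^{(a)}(ρx) L_n^{(a)}(x) e^{-(ρ+1)x/2} x^a dx = (-1)^m (Γ(a+n+1)/n!) ((a+1)_m/m!) (2/(ρ+1))^{a+1} ((ρ-1)/(ρ+1))^{n+m} M_n(m; a+1; ((ρ-1)/(ρ+1))²). -/

import Mathlib

/-!
Both Laguerre polynomials are terminating ₁F₁ series, and against the weight `x^a e^{-cx}`
the monomial `x^N` integrates to `Γ(a+1) (a+1)_N / c^{a+1+N}`. With `b = a + 1` the integral
becomes a double sum over `j ≤ m`, `k ≤ n` weighted by `(b)_{j+k} / ((b)_j (b)_k)`.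
Chu–Vandermonde expands this ratio as `∑ᵢ C(j,i) C(k,i) i! / (b)_i`; the sums over `j` and `k`
are then binomial sums in `ρ/c = 1 + s` and `1/c = 1 - s`, where `c = (ρ+1)/2` and
`s = (ρ-1)/(ρ+1)`, and what remains is the terminating ₂F₁ defining `M_n(m; b; s²)`.
-/

open Complex Finset

/-- Pochhammer symbol `(a)_n` for complex `a`. -/
noncomputable def poch (a : ℂ) (n : ℕ) : ℂ := ∏ i ∈ Finset.range n, (a + i)

/-- Confluent hypergeometric function `₁F₁(a; b; x)`. -/
noncomputable def F11 (a b x : ℂ) : ℂ :=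
  ∑' k : ℕ, poch a k * x ^ k / (poch b k * k.factorial)

/-- Gauss hypergeometric function `₂F₁(a, b; c; x)`. -/
noncomputable def F21 (a b c x : ℂ) : ℂ :=
  ∑' k : ℕ, poch a k * poch b k * x ^ k / (poch c k * k.factorial)

/-- Generalized Laguerre polynomial `L_n^{(α)}(x)`. -/
noncomputable def laguerre (n : ℕ) (α x : ℂ) : ℂ :=
  poch (α + 1) n / n.factorial * F11 (-(n : ℂ)) (α + 1) x

open MeasureTheory

/-- Meixner polynomial `M_n(x; β; c) = ₂F₁(-n, -x; β; 1 - 1/c)`. -/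
noncomputable def meixnerPoly (n : ℕ) (x β c : ℂ) : ℂ :=
  F21 (-(n : ℂ)) (-x) β (1 - 1 / c)

lemma poch_add (a : ℂ) (j k : ℕ) : poch a (j + k) = poch a j * poch (a + j) k := by
  simp [poch, prod_range_add, add_assoc]

lemma poch_neg_natCast (n k : ℕ) :
    poch (-n) k = (-1) ^ k * k.factorial * n.choose k := by
  rw [mul_assoc, ← Nat.cast_mul, ← Nat.descFactorial_eq_factorial_mul_choose,
    ← descPochhammer_eval_eq_descFactorial, descPochhammer_eval_eq_prod_range, poch,
    show ((-1 : ℂ)) ^ k = (-1) ^ #(range k) by rw [card_range], ← prod_neg]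
  exact prod_congr rfl fun i _ => by ring

lemma poch_neg_natCast_of_lt {n k : ℕ} (h : n < k) : poch (-n) k = 0 := by
  simp [poch_neg_natCast, Nat.choose_eq_zero_of_lt h]

lemma poch_ne_zero_of_re_pos {b : ℂ} (hb : 0 < b.re) (i : ℕ) : poch b i ≠ 0 := by
  refine prod_ne_zero_iff.2 fun j _ => ne_of_apply_ne re ?_
  simpa using (add_pos_of_pos_of_nonneg hb j.cast_nonneg).ne'

lemma ofReal_Gamma_add_natCast {b : ℝ} (hb : 0 < b) (N : ℕ) :
    (Real.Gamma (b + N) : ℂ) = Real.Gamma b * poch b N := by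
  induction N with
  | zero => simp [poch]
  | succ N ih =>
    rw [Nat.cast_succ, ← add_assoc, Real.Gamma_add_one (by positivity), ofReal_mul, ih, poch_add]
    simp [poch]; ring

lemma poch_eq_ascPochhammer_eval (y : ℂ) (k : ℕ) : poch y k = (ascPochhammer ℂ k).eval y := by
  induction k with
  | zero => simp [poch]
  | succ k ih => rw [ascPochhammer_succ_eval, ← ih, poch, prod_range_succ, poch]

lemma poch_add_natCast_eq_sum (x : ℂ) (j k : ℕ) :
    poch (x + j) k =
      ∑ i ∈ range (k + 1), k.choose i * j.choose i * i.factorial * poch (x + i) (k - i) := by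
  -- `(y)_l` is the falling factorial of `y + l - 1`, so this is the falling-factorial
  -- Chu–Vandermonde identity `Ring.descPochhammer_smeval_add` at `j + (x + k - 1)`.
  have hdesc (y : ℂ) (l : ℕ) : poch y l = (descPochhammer ℤ l).smeval (y + l - 1) := by
    rw [Polynomial.descPochhammer_smeval_eq_ascPochhammer, Polynomial.ascPochhammer_smeval_eq_eval,
      poch_eq_ascPochhammer_eval]
    ring_nf
  rw [hdesc, show x + j + k - 1 = (j : ℂ) + (x + k - 1) by ring,
    Ring.descPochhammer_smeval_add _ (Commute.all _ _), Nat.sum_antidiagonal_eq_sum_range_succ_mk]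
  refine sum_congr rfl fun i hi => ?_
  rw [Polynomial.descPochhammer_smeval_eq_descFactorial,
    Nat.descFactorial_eq_factorial_mul_choose, hdesc, Nat.cast_sub (mem_range_succ_iff.1 hi)]
  push_cast
  ring_nf

lemma poch_add_eq_mul_sum {b : ℂ} (hb : ∀ i, poch b i ≠ 0) (j k : ℕ) :
    poch b (j + k) =
      poch b j * poch b k *
        ∑ i ∈ range (k + 1), (j.choose i * k.choose i * i.factorial : ℂ) / poch b i := by
  rw [poch_add, poch_add_natCast_eq_sum, mul_assoc, mul_sum (range (k + 1)) _ (poch b k)]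
  refine congrArg (poch b j * ·) (sum_congr rfl fun i hi => ?_)
  have hk : poch b k = poch b i * poch (b + i) (k - i) := by
    rw [← poch_add, Nat.add_sub_cancel' (mem_range_succ_iff.1 hi)]
  rw [hk]
  field_simp [hb i]

lemma sum_neg_one_pow_mul_choose_mul_choose (m i : ℕ) (u : ℂ) :
    ∑ j ∈ range (m + 1), (-1) ^ j * m.choose j * j.choose i * u ^ j =
      (-1) ^ i * m.choose i * u ^ i * (1 - u) ^ (m - i) := by
  rcases lt_or_ge m i with h | h
  · rw [Nat.choose_eq_zero_of_lt h, Nat.cast_zero, mul_zero, zero_mul, zero_mul]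
    exact sum_eq_zero fun j hj => by
      rw [Nat.choose_eq_zero_of_lt ((mem_range_succ_iff.1 hj).trans_lt h)]; simp
  obtain ⟨l, rfl⟩ := Nat.exists_eq_add_of_le h
  rw [show i + l + 1 = i + (l + 1) by ring, sum_range_add, Nat.add_sub_cancel_left,
    ← neg_add_eq_sub, add_pow, mul_sum,
    sum_eq_zero fun j hj => by rw [Nat.choose_eq_zero_of_lt (mem_range.1 hj)]; simp, zero_add]
  refine sum_congr rfl fun t _ => ?_
  have hc : ((i + l).choose (i + t) * (i + t).choose i : ℂ) = (i + l).choose i * l.choose t := by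
    exact_mod_cast (Nat.choose_mul (Nat.le_add_right i t)).trans (by simp)
  rw [mul_assoc _ _ ((i + t).choose i : ℂ), hc, one_pow, mul_one, neg_pow u, pow_add, pow_add]
  ring

lemma sum_sum_choose_mul_poch_add {b : ℂ} (hb : ∀ i, poch b i ≠ 0) (m n : ℕ) (u v : ℂ) :
    ∑ j ∈ range (m + 1), ∑ k ∈ range (n + 1),
        (-1) ^ j * m.choose j * u ^ j * ((-1) ^ k * n.choose k * v ^ k) *
          (poch b (j + k) / (poch b j * poch b k)) =
      ∑ i ∈ range (n + 1), i.factorial / poch b i *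
        ((-1) ^ i * m.choose i * u ^ i * (1 - u) ^ (m - i)) *
        ((-1) ^ i * n.choose i * v ^ i * (1 - v) ^ (n - i)) := by
  have hratio : ∀ j, ∀ k ∈ range (n + 1), poch b (j + k) / (poch b j * poch b k) =
      ∑ i ∈ range (n + 1), (j.choose i * k.choose i * i.factorial : ℂ) / poch b i :=
      fun j k hk => by
    rw [poch_add_eq_mul_sum hb, mul_div_cancel_left₀ _ (mul_ne_zero (hb j) (hb k))]
    refine sum_subset (range_subset_range.2 (by simpa using hk)) fun i _ hi => ?_
    rw [Nat.choose_eq_zero_of_lt (by simpa using hi : k < i)]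
    simp
  conv_rhs =>
    enter [2, i]
    rw [← sum_neg_one_pow_mul_choose_mul_choose, ← sum_neg_one_pow_mul_choose_mul_choose,
      mul_assoc, sum_mul_sum, mul_sum]
    enter [2, j]
    rw [mul_sum]
  rw [sum_comm (s := range (n + 1))]
  refine sum_congr rfl fun j _ => ?_
  rw [sum_comm (s := range (n + 1)) (t := range (n + 1))]
  refine sum_congr rfl fun k hk => ?_
  rw [hratio j k hk, mul_sum]
  refine sum_congr rfl fun i _ => ?_
  ring

lemma F11_neg_natCast (n : ℕ) (b x : ℂ) :
    F11 (-n) b x = ∑ k ∈ range (n + 1), poch (-n) k * x ^ k / (poch b k * k.factorial) :=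
  tsum_eq_sum fun k hk => by
    rw [poch_neg_natCast_of_lt (by simpa using hk), zero_mul, zero_div]

lemma F21_neg_natCast (n : ℕ) (a c x : ℂ) :
    F21 (-n) a c x =
      ∑ k ∈ range (n + 1), poch (-n) k * poch a k * x ^ k / (poch c k * k.factorial) :=
  tsum_eq_sum fun k hk => by
    rw [poch_neg_natCast_of_lt (by simpa using hk), zero_mul, zero_mul, zero_div]

lemma laguerre_eq_sum (n : ℕ) (α x : ℂ) :
    laguerre n α x = poch (α + 1) n / n.factorial *
      ∑ k ∈ range (n + 1), (-1) ^ k * n.choose k / poch (α + 1) k * x ^ k := by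
  rw [laguerre, F11_neg_natCast]
  congr 1
  refine sum_congr rfl fun k _ => ?_
  rw [poch_neg_natCast]
  field_simp [k.factorial_ne_zero]

lemma meixnerPoly_natCast_eq_sum (n m : ℕ) (β c : ℂ) :
    meixnerPoly n m β c =
      ∑ i ∈ range (n + 1),
        n.choose i * m.choose i * i.factorial / poch β i * (1 - 1 / c) ^ i := by
  rw [meixnerPoly, F21_neg_natCast]
  refine sum_congr rfl fun i _ => ?_
  have hsign : (-1 : ℂ) ^ i * (-1) ^ i = 1 := by rw [← mul_pow]; norm_num
  rw [poch_neg_natCast, poch_neg_natCast, mul_comm (poch β i), ← div_div, div_mul_eq_mul_div]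
  congr 1
  field_simp
  linear_combination (i.factorial * n.choose i * m.choose i * (1 - 1 / c) ^ i : ℂ) * hsign

lemma sum_sum_choose_mul_poch_add_eq_meixnerPoly {b s : ℂ} (hb : ∀ i, poch b i ≠ 0)
    (hs : s ≠ 0) (m n : ℕ) :
    ∑ j ∈ range (m + 1), ∑ k ∈ range (n + 1),
        (-1) ^ j * m.choose j * (1 + s) ^ j * ((-1) ^ k * n.choose k * (1 - s) ^ k) *
          (poch b (j + k) / (poch b j * poch b k)) =
      (-1) ^ m * s ^ (n + m) * meixnerPoly n m b (s ^ 2) := by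
  rw [sum_sum_choose_mul_poch_add hb, meixnerPoly_natCast_eq_sum, mul_sum]
  refine sum_congr rfl fun i hi => ?_
  rcases lt_or_ge m i with him | him
  · simp [Nat.choose_eq_zero_of_lt him]
  obtain ⟨m, rfl⟩ := Nat.exists_eq_add_of_le him
  obtain ⟨n, rfl⟩ := Nat.exists_eq_add_of_le (mem_range_succ_iff.1 hi)
  have hz : 1 - 1 / s ^ 2 = (-1) * ((1 + s) * (1 - s) / s ^ 2) := by field_simp; ring
  rw [Nat.add_sub_cancel_left, Nat.add_sub_cancel_left, hz, mul_pow, div_pow, mul_pow,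
    sub_add_cancel_left, sub_sub_cancel]
  field_simp
  ring

lemma pow_mul_cexp_mul_rpow_eq_ofReal {x : ℝ} (hx : 0 < x) (a c : ℝ) (N : ℕ) :
    (x : ℂ) ^ N * cexp (-(c * x)) * ((x ^ a : ℝ) : ℂ) =
      ((x ^ (a + N) * Real.exp (-(c * x)) : ℝ) : ℂ) := by
  rw [Real.rpow_add hx, Real.rpow_natCast]
  push_cast
  ring

lemma integrableOn_pow_mul_cexp_mul_rpow {a c : ℝ} (ha : -1 < a) (hc : 0 < c) (N : ℕ) :
    IntegrableOn (fun x : ℝ => (x : ℂ) ^ N * cexp (-(c * x)) * ((x ^ a : ℝ) : ℂ))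
      (Set.Ioi 0) := by
  have h := integrableOn_rpow_mul_exp_neg_mul_rpow (s := a + N)
    (by linarith [N.cast_nonneg (α := ℝ)]) one_pos hc
  refine IntegrableOn.congr_fun h.ofReal (fun x hx => ?_) measurableSet_Ioi
  simp only [Real.rpow_one, neg_mul]
  exact (pow_mul_cexp_mul_rpow_eq_ofReal hx a c N).symm

lemma integral_pow_mul_cexp_mul_rpow {a c : ℝ} (ha : -1 < a) (hc : 0 < c) (N : ℕ) :
    ∫ x in Set.Ioi (0 : ℝ), (x : ℂ) ^ N * cexp (-(c * x)) * ((x ^ a : ℝ) : ℂ) =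
      ((Real.Gamma (a + 1) * (1 / c) ^ (a + 1) : ℝ) : ℂ) * ((1 / c) ^ N * poch (a + 1) N) := by
  rw [setIntegral_congr_fun measurableSet_Ioi fun x hx =>
      pow_mul_cexp_mul_rpow_eq_ofReal hx a c N,
    integral_complex_ofReal, ← add_sub_cancel_right (a + N) 1,
    Real.integral_rpow_mul_exp_neg_mul_Ioi (by linarith) hc, add_right_comm,
    Real.rpow_add (by positivity), Real.rpow_natCast, ofReal_mul,
    ofReal_Gamma_add_natCast (by linarith)]
  push_cast
  ring

lemma integral_sum_mul_sum_mul_cexp_mul_rpow {a c : ℝ} (ha : -1 < a) (hc : 0 < c)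
    (s t : Finset ℕ) (p q : ℕ → ℂ) :
    ∫ x in Set.Ioi (0 : ℝ),
        (∑ j ∈ s, p j * (x : ℂ) ^ j) * (∑ k ∈ t, q k * (x : ℂ) ^ k) * cexp (-(c * x)) *
          ((x ^ a : ℝ) : ℂ) =
      ((Real.Gamma (a + 1) * (1 / c) ^ (a + 1) : ℝ) : ℂ) *
        ∑ j ∈ s, ∑ k ∈ t, p j * q k * ((1 / c) ^ (j + k) * poch (a + 1) (j + k)) := by
  have hexpand (x : ℝ) :
      (∑ j ∈ s, p j * (x : ℂ) ^ j) * (∑ k ∈ t, q k * (x : ℂ) ^ k) * cexp (-(c * x)) *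
        ((x ^ a : ℝ) : ℂ) =
      ∑ j ∈ s, ∑ k ∈ t,
        p j * q k * ((x : ℂ) ^ (j + k) * cexp (-(c * x)) * ((x ^ a : ℝ) : ℂ)) := by
    rw [sum_mul_sum, sum_mul, sum_mul]
    refine sum_congr rfl fun j _ => ?_
    rw [sum_mul, sum_mul]
    exact sum_congr rfl fun k _ => by ring
  have hint := fun N => integrableOn_pow_mul_cexp_mul_rpow ha hc N
  simp_rw [hexpand]
  rw [integral_finsetSum _ fun j _ => integrable_finsetSum _ fun k _ => (hint _).const_mul _,
    mul_sum]
  refine sum_congr rfl fun j _ => ?_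
  rw [integral_finsetSum _ fun k _ => (hint _).const_mul _, mul_sum]
  refine sum_congr rfl fun k _ => ?_
  rw [integral_const_mul, integral_pow_mul_cexp_mul_rpow ha hc]
  ring

lemma integral_laguerre_mul_laguerre_eq_sum {a c : ℝ} (ha : -1 < a) (hc : 0 < c) (r : ℂ)
    (m n : ℕ) :
    ∫ x in Set.Ioi (0 : ℝ), laguerre m a (r * x) * laguerre n a x * cexp (-(c * x)) *
        ((x ^ a : ℝ) : ℂ) =
      ((Real.Gamma (a + 1) * (1 / c) ^ (a + 1) : ℝ) : ℂ) *
        (poch (a + 1) m / m.factorial * (poch (a + 1) n / n.factorial)) *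
        ∑ j ∈ range (m + 1), ∑ k ∈ range (n + 1),
          (-1) ^ j * m.choose j * (r * (1 / c)) ^ j * ((-1) ^ k * n.choose k * (1 / c) ^ k) *
            (poch (a + 1) (j + k) / (poch (a + 1) j * poch (a + 1) k)) := by
  conv_lhs =>
    simp only [laguerre_eq_sum, mul_pow, mul_sum _ _ (poch ((a : ℂ) + 1) _ / _), ← mul_assoc]
  rw [integral_sum_mul_sum_mul_cexp_mul_rpow ha hc, mul_assoc (ofReal _),
    mul_sum _ _ (_ * _ : ℂ)]
  congr 1
  refine sum_congr rfl fun j _ => ?_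
  rw [mul_sum]
  refine sum_congr rfl fun k _ => ?_
  ring

/-- `∫_0^∞ L_m^{(a)}(ρx) L_n^{(a)}(x) e^{-(ρ+1)x/2} x^a dx` expressed via a Meixner
polynomial, for `ρ > 1`, `a > -1`. -/
theorem laguerre_product_integral_meixner (ρ a : ℝ) (hρ : 1 < ρ) (ha : -1 < a) (m n : ℕ) :
    ∫ x in Set.Ioi (0 : ℝ),
        laguerre m (a : ℂ) ((ρ : ℂ) * x) * laguerre n (a : ℂ) (x : ℂ) *
          Complex.exp (-((ρ : ℂ) + 1) * x / 2) * ((x ^ a : ℝ) : ℂ)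
      = (-1) ^ m * ((Real.Gamma (a + n + 1) / n.factorial : ℝ) : ℂ) *
          (poch ((a : ℂ) + 1) m / m.factorial) *
          (((2 / (ρ + 1)) ^ (a + 1) : ℝ) : ℂ) *
          ((((ρ - 1) / (ρ + 1)) ^ (n + m) : ℝ) : ℂ) *
          meixnerPoly n (m : ℂ) ((a : ℂ) + 1) ((((ρ - 1) / (ρ + 1)) ^ 2 : ℝ) : ℂ) := by
  have hs : (((ρ - 1) / (ρ + 1) : ℝ) : ℂ) ≠ 0 :=
    ofReal_ne_zero.2 (div_pos (by linarith) (by linarith)).ne'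
  have hρ1 : (ρ : ℂ) + 1 ≠ 0 := by exact_mod_cast (by linarith : ρ + 1 ≠ 0)
  have hu : (ρ : ℂ) * (1 / ((ρ + 1) / 2 : ℝ)) = 1 + ((ρ - 1) / (ρ + 1) : ℝ) := by
    push_cast; field_simp; ring
  have hv : (1 : ℂ) / ((ρ + 1) / 2 : ℝ) = 1 - ((ρ - 1) / (ρ + 1) : ℝ) := by
    push_cast; field_simp; ring
  have hexp (x : ℝ) : cexp (-((ρ : ℂ) + 1) * x / 2) = cexp (-(((ρ + 1) / 2 : ℝ) * x)) := by
    push_cast; ring_nf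
  have hΓ : ((Real.Gamma (a + n + 1) / n.factorial : ℝ) : ℂ) =
      Real.Gamma (a + 1) * (poch (a + 1) n / n.factorial) := by
    rw [add_right_comm, ofReal_div, ofReal_Gamma_add_natCast (by linarith)]
    push_cast
    ring
  simp_rw [hexp]
  rw [integral_laguerre_mul_laguerre_eq_sum ha (by linarith), hu, hv,
    sum_sum_choose_mul_poch_add_eq_meixnerPoly (poch_ne_zero_of_re_pos (by simp; linarith)) hs,
    hΓ, one_div_div]
  push_cast
  ring
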